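/- (Uniform limit as λ → −∞) For every u ∈ ℝ^E, the Sparsegen routing output converges to the uniform distribution as λ → −∞: the map λ ↦ sparsegen(u, λ) tends to the vector (1/E, …, 1/E) as λ tends to −∞. In particular, for all λ < 1 − (U_E − E·u_(E)) every coordinate of sparsegen(u, λ) equals 1/E + (u_i − U_E/E)/(1 − λ), which tends to 1/E. -/

import Mathlib

/-!
For `λ < 1` and `q` in the simplex, `g_{u,λ}(q) = (1 - λ)‖q - u/(1 - λ)‖² + (terms independent of q)`,
and the simplex lies in the hyperplane `∑ qᵢ = 1`, so adding a constant vector to `u/(1 - λ)` does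
not change the minimizer. Shifting `u/(1 - λ)` onto that hyperplane gives the point with coordinates
`1/E + (uᵢ - U_E/E)/(1 - λ)`; as soon as `1 - λ ≥ U_E - E·u_(E)` all of its coordinates are
nonnegative, so it lies in the simplex and is the minimizer. It tends to the uniform vector.
-/

noncomputable section

/-- The probability simplex in `ℝ^E`. -/
def simplex (E : ℕ) : Set (EuclideanSpace ℝ (Fin E)) :=
  {p | (∀ i, 0 ≤ p i) ∧ ∑ i, p i = 1}

/-- The Sparsegen objective `g_{u,λ}(p) = ‖p − u‖₂² − λ‖p‖₂²`. -/
def sparsegenObj {E : ℕ} (u : EuclideanSpace ℝ (Fin E)) (lam : ℝ)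
    (p : EuclideanSpace ℝ (Fin E)) : ℝ :=
  ‖p - u‖ ^ 2 - lam * ‖p‖ ^ 2

open Classical in
/-- The Sparsegen routing output: the (unique, for `λ < 1`) minimizer of the
Sparsegen objective over the probability simplex. -/
noncomputable def sparsegen {E : ℕ} (u : EuclideanSpace ℝ (Fin E)) (lam : ℝ) :
    EuclideanSpace ℝ (Fin E) :=
  if h : ∃ p ∈ simplex E, IsMinOn (sparsegenObj u lam) (simplex E) p then h.choose
  else 0

open Filter Topology

section

variable {E : ℕ}

lemma sparsegenObj_eq_sum (u : EuclideanSpace ℝ (Fin E)) (lam : ℝ)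
    (q : EuclideanSpace ℝ (Fin E)) :
    sparsegenObj u lam q = ∑ i, ((q i - u i) ^ 2 - lam * q i ^ 2) := by
  simp only [sparsegenObj, EuclideanSpace.real_norm_sq_eq, Finset.mul_sum,
    ← Finset.sum_sub_distrib, PiLp.sub_apply]

lemma sparsegenObj_eq_add_norm_sq {u p q : EuclideanSpace ℝ (Fin E)} {lam c : ℝ}
    (hu : ∀ i, u i = (1 - lam) * p i + c) (hsum : ∑ i, q i = ∑ i, p i) :
    sparsegenObj u lam q = sparsegenObj u lam p + (1 - lam) * ‖q - p‖ ^ 2 := by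
  rw [sparsegenObj_eq_sum, sparsegenObj_eq_sum, EuclideanSpace.real_norm_sq_eq]
  calc ∑ i, ((q i - u i) ^ 2 - lam * q i ^ 2)
      = ∑ i, (((p i - u i) ^ 2 - lam * p i ^ 2) + (1 - lam) * (q i - p i) ^ 2
          + 2 * c * (p i - q i)) := by
        refine Finset.sum_congr rfl fun i _ => ?_
        rw [hu i]
        ring
    _ = ∑ i, ((p i - u i) ^ 2 - lam * p i ^ 2) + (1 - lam) * ∑ i, (q i - p i) ^ 2
          + 2 * c * (∑ i, p i - ∑ i, q i) := by
        rw [Finset.sum_add_distrib, Finset.sum_add_distrib, Finset.mul_sum,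
          ← Finset.sum_sub_distrib, Finset.mul_sum]
    _ = _ := by simp [hsum]

lemma sparsegen_eq_of_forall_eq_mul_add {u p : EuclideanSpace ℝ (Fin E)} {lam c : ℝ}
    (hlam : lam < 1) (hp : p ∈ simplex E) (hu : ∀ i, u i = (1 - lam) * p i + c) :
    sparsegen u lam = p := by
  have hobj : ∀ q ∈ simplex E,
      sparsegenObj u lam q = sparsegenObj u lam p + (1 - lam) * ‖q - p‖ ^ 2 :=
    fun q hq => sparsegenObj_eq_add_norm_sq hu (hq.2.trans hp.2.symm)
  have hpmin : IsMinOn (sparsegenObj u lam) (simplex E) p := isMinOn_iff.mpr fun q hq => by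
    rw [hobj q hq]
    nlinarith [sq_nonneg ‖q - p‖]
  have hex : ∃ q ∈ simplex E, IsMinOn (sparsegenObj u lam) (simplex E) q := ⟨p, hp, hpmin⟩
  obtain ⟨hqmem, hqmin⟩ := hex.choose_spec
  have hle := isMinOn_iff.mp hqmin p hp
  rw [hobj _ hqmem] at hle
  have hdist : ‖hex.choose - p‖ ^ 2 = 0 := by nlinarith [sq_nonneg ‖hex.choose - p‖]
  rw [sparsegen, dif_pos hex]
  simpa [sub_eq_zero] using hdist

def sparsegenDense (u : EuclideanSpace ℝ (Fin E)) (lam : ℝ) :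
    EuclideanSpace ℝ (Fin E) :=
  WithLp.toLp 2 fun i => 1 / E + (u i - (∑ j, u j) / E) / (1 - lam)

lemma sparsegenDense_apply (u : EuclideanSpace ℝ (Fin E)) (lam : ℝ) (i : Fin E) :
    sparsegenDense u lam i = 1 / E + (u i - (∑ j, u j) / E) / (1 - lam) :=
  rfl

lemma eq_mul_sparsegenDense_add (hE : E ≠ 0) (u : EuclideanSpace ℝ (Fin E)) {lam : ℝ}
    (hlam : lam ≠ 1) (i : Fin E) :
    u i = (1 - lam) * sparsegenDense u lam i + ((∑ j, u j) / E - (1 - lam) / E) := by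
  have : (1 : ℝ) - lam ≠ 0 := sub_ne_zero.mpr (Ne.symm hlam)
  rw [sparsegenDense_apply]
  field_simp
  ring

lemma sparsegenDense_mem_simplex (hE : E ≠ 0) {u : EuclideanSpace ℝ (Fin E)} {lam : ℝ}
    (hlam : lam < 1) (hu : ∀ i, ∑ j, u j - E * u i ≤ 1 - lam) :
    sparsegenDense u lam ∈ simplex E := by
  have hlam' : (0 : ℝ) < 1 - lam := sub_pos.mpr hlam
  have hE' : (0 : ℝ) < E := by exact_mod_cast Nat.pos_of_ne_zero hE
  constructor
  · intro i
    have : sparsegenDense u lam i = ((1 - lam) - (∑ j, u j - E * u i)) / (E * (1 - lam)) := by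
      rw [sparsegenDense_apply]
      field_simp
      ring
    rw [this]
    exact div_nonneg (sub_nonneg.mpr (hu i)) (by positivity)
  · simp only [sparsegenDense_apply, Finset.sum_add_distrib, ← Finset.sum_div,
      Finset.sum_sub_distrib, Finset.sum_const, Finset.card_univ, Fintype.card_fin, nsmul_eq_mul]
    field_simp
    ring

lemma sparsegen_eq_sparsegenDense (hE : E ≠ 0) {u : EuclideanSpace ℝ (Fin E)} {lam : ℝ}
    (hlam : lam < 1) (hu : ∀ i, ∑ j, u j - E * u i ≤ 1 - lam) :
    sparsegen u lam = sparsegenDense u lam :=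
  sparsegen_eq_of_forall_eq_mul_add hlam (sparsegenDense_mem_simplex hE hlam hu)
    (eq_mul_sparsegenDense_add hE u hlam.ne)

lemma tendsto_add_div_one_sub_atBot (a b : ℝ) :
    Tendsto (fun lam : ℝ => a + b / (1 - lam)) atBot (𝓝 a) := by
  have h : Tendsto (fun lam : ℝ => b / (1 - lam)) atBot (𝓝 0) :=
    tendsto_const_nhds.div_atTop (tendsto_atTop_add_const_left _ 1 tendsto_neg_atBot_atTop)
  simpa using tendsto_const_nhds.add h

lemma tendsto_sparsegenDense_atBot (u : EuclideanSpace ℝ (Fin E)) :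
    Tendsto (sparsegenDense u) atBot (𝓝 (WithLp.toLp 2 fun _ : Fin E => (1 / E : ℝ))) :=
  (PiLp.continuous_toLp 2 _).continuousAt.tendsto.comp <|
    tendsto_pi_nhds.mpr fun _ => tendsto_add_div_one_sub_atBot _ _

lemma apply_perm_le_of_antitone {α : Type*} [Preorder α] {n : ℕ} {f : Fin n → α}
    {σ : Equiv.Perm (Fin n)} (hσ : Antitone fun i => f (σ i)) {k : Fin n} (hk : IsTop k)
    (i : Fin n) : f (σ k) ≤ f i := by
  simpa using hσ (hk (σ.symm i))

end

/-- Uniform limit as `λ → −∞`: for every `u ∈ ℝ^E`, `sparsegen(u, λ)` tends to the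
uniform distribution `(1/E, …, 1/E)` as `λ → −∞`.  In particular, for all
`λ < 1 − (U_E − E·u_(E))` every coordinate of `sparsegen(u, λ)` equals
`1/E + (u_i − U_E/E)/(1 − λ)`, which tends to `1/E`. -/
theorem sparsegen_tendsto_uniform (E : ℕ) (hE : 1 ≤ E)
    (u : EuclideanSpace ℝ (Fin E)) (σ : Equiv.Perm (Fin E))
    (hσ : Antitone fun i => u (σ i)) :
    Filter.Tendsto (fun lam : ℝ => sparsegen u lam) Filter.atBot
      (nhds (WithLp.toLp 2 (fun _ : Fin E => (1 / E : ℝ)) : EuclideanSpace ℝ (Fin E))) ∧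
    (∀ lam : ℝ, lam < 1 - ((∑ j : Fin E, u (σ j)) - E * u (σ ⟨E - 1, by omega⟩)) →
      ∀ i : Fin E,
        sparsegen u lam i = 1 / E + (u i - (∑ j : Fin E, u (σ j)) / E) / (1 - lam)) ∧
    (∀ i : Fin E,
      Filter.Tendsto (fun lam : ℝ => 1 / E + (u i - (∑ j : Fin E, u (σ j)) / E) / (1 - lam))
        Filter.atBot (nhds (1 / E))) := by
  have hE0 : E ≠ 0 := by omega
  have hsum : ∑ j, u (σ j) = ∑ j, u j := Equiv.sum_comp σ u
  set m := u (σ ⟨E - 1, by omega⟩)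
  have hmin : ∀ i, m ≤ u i :=
    apply_perm_le_of_antitone hσ fun j => Fin.le_def.mpr (Nat.le_sub_one_of_lt j.isLt)
  have hdense : ∀ lam : ℝ, lam < 1 - (∑ j, u (σ j) - E * m) →
      sparsegen u lam = sparsegenDense u lam := by
    intro lam hlam
    rw [hsum] at hlam
    have hspread : ∀ i, ∑ j, u j - E * u i ≤ ∑ j, u j - E * m := fun i => by gcongr; exact hmin i
    have hspread_nonneg : 0 ≤ ∑ j, u j - E * m := by
      simpa using Finset.sum_le_sum (s := Finset.univ) fun i _ => hmin i
    exact sparsegen_eq_sparsegenDense hE0 (by linarith) fun i => (hspread i).trans (by linarith)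
  refine ⟨(tendsto_sparsegenDense_atBot u).congr' ?_, ?_,
    fun i => tendsto_add_div_one_sub_atBot _ _⟩
  · filter_upwards [eventually_lt_atBot _] with lam hlam
    exact (hdense lam hlam).symm
  · intro lam hlam i
    rw [hdense lam hlam, sparsegenDense_apply, hsum]
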